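/- arXiv:0912.0795 — 2 statements merged into one kernel-verified Lean document; each statement's English description precedes it below -/
import Mathlib

section
/- The Cohen–Rhin sequence U_n is strictly 2-log-convex: for all n ≥ 1, (U_{n-1} U_{n+1} - U_n^2)(U_{n+1} U_{n+3} - U_{n+2}^2) > (U_n U_{n+2} - U_{n+1}^2)^2. -/
set_option maxHeartbeats 12000000


noncomputable def pl (s x : ℝ) : ℝ := (135 + s)*x^5 + (-675/2 + (-5/2)*s)*x^4 + (1377/2 + (1469/288)*s)*x^3 + (-39309/32 + (-5243/576)*s)*x^2 + (16077/8 + (2470991/165888)*s)*x - 6500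
noncomputable def pu (s x : ℝ) : ℝ := pl s x + 13000
noncomputable def dl (s x : ℝ) : ℝ := pl s x * (x-1)^5 - pu s (x-1) * x^5
noncomputable def du (s x : ℝ) : ℝ := pu s x * (x-1)^5 - pl s (x-1) * x^5

lemma pl_pos (s x : ℝ) (hs2 : s^2 = 18252) (hlo : (1350999/10000:ℝ) < s)
    (hhi : s < 1351/10) (hx : (16:ℝ) ≤ x) : 0 < pl s x := by
  have hy : (0:ℝ) ≤ x - 16 := by linarith
  have e : pl s x = ((-6500) + (16077/8) * x ^ 1 + (-39309/32) * x ^ 2 + (1377/2) * x ^ 3 + (-675/2) * x ^ 4 + 135 * x ^ 5) + ((2470991/165888) * x ^ 1 + (-5243/576) * x ^ 2 + (1469/288) * x ^ 3 + (-5/2) * x ^ 4 + 1 * x ^ 5) * s := by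
    simp only [pl]
    ring
  have eh1 : ((-6500) + (16077/8) * x ^ 1 + (-39309/32) * x ^ 2 + (1377/2) * x ^ 3 + (-675/2) * x ^ 4 + 135 * x ^ 5) + ((2470991/165888) * x ^ 1 + (-5243/576) * x ^ 2 + (1469/288) * x ^ 3 + (-5/2) * x ^ 4 + 1 * x ^ 5) * (1350999/10000) = (312369069649161/1280000) + (321234551118389/4096000) * (x - 16) ^ 1 + (6457456066011/640000) * (x - 16) ^ 2 + (207877556259/320000) * (x - 16) ^ 3 + (83730969/4000) * (x - 16) ^ 4 + (2700999/10000) * (x - 16) ^ 5 := by ring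
  have h1 : (0:ℝ) < ((-6500) + (16077/8) * x ^ 1 + (-39309/32) * x ^ 2 + (1377/2) * x ^ 3 + (-675/2) * x ^ 4 + 135 * x ^ 5) + ((2470991/165888) * x ^ 1 + (-5243/576) * x ^ 2 + (1469/288) * x ^ 3 + (-5/2) * x ^ 4 + 1 * x ^ 5) * (1350999/10000) := by
    rw [eh1]
    linarith [hy, pow_nonneg hy 2, pow_nonneg hy 3, pow_nonneg hy 4, pow_nonneg hy 5]
  have eh2 : ((-6500) + (16077/8) * x ^ 1 + (-39309/32) * x ^ 2 + (1377/2) * x ^ 3 + (-675/2) * x ^ 4 + 135 * x ^ 5) + ((2470991/165888) * x ^ 1 + (-5243/576) * x ^ 2 + (1469/288) * x ^ 3 + (-5/2) * x ^ 4 + 1 * x ^ 5) * (1351/10) = (25301904009449/103680) + (26020008274069/331776) * (x - 16) ^ 1 + (58117126111/5760) * (x - 16) ^ 2 + (1870898699/2880) * (x - 16) ^ 3 + (83731/4) * (x - 16) ^ 4 + (2701/10) * (x - 16) ^ 5 := by ring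
  have h2 : (0:ℝ) < ((-6500) + (16077/8) * x ^ 1 + (-39309/32) * x ^ 2 + (1377/2) * x ^ 3 + (-675/2) * x ^ 4 + 135 * x ^ 5) + ((2470991/165888) * x ^ 1 + (-5243/576) * x ^ 2 + (1469/288) * x ^ 3 + (-5/2) * x ^ 4 + 1 * x ^ 5) * (1351/10) := by
    rw [eh2]
    linarith [hy, pow_nonneg hy 2, pow_nonneg hy 3, pow_nonneg hy 4, pow_nonneg hy 5]
  have t1 : (0:ℝ) < (1351/10 - s) * (((-6500) + (16077/8) * x ^ 1 + (-39309/32) * x ^ 2 + (1377/2) * x ^ 3 + (-675/2) * x ^ 4 + 135 * x ^ 5) + ((2470991/165888) * x ^ 1 + (-5243/576) * x ^ 2 + (1469/288) * x ^ 3 + (-5/2) * x ^ 4 + 1 * x ^ 5) * (1350999/10000)) := mul_pos (by linarith) h1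
  have t2 : (0:ℝ) < (s - 1350999/10000) * (((-6500) + (16077/8) * x ^ 1 + (-39309/32) * x ^ 2 + (1377/2) * x ^ 3 + (-675/2) * x ^ 4 + 135 * x ^ 5) + ((2470991/165888) * x ^ 1 + (-5243/576) * x ^ 2 + (1469/288) * x ^ 3 + (-5/2) * x ^ 4 + 1 * x ^ 5) * (1351/10)) := mul_pos (by linarith) h2
  linarith [t1, t2, e]

lemma dl_pos (s x : ℝ) (hs2 : s^2 = 18252) (hlo : (1350999/10000:ℝ) < s)
    (hhi : s < 1351/10) (hx : (17:ℝ) ≤ x) : 0 < dl s x := by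
  have hy : (0:ℝ) ≤ x - 17 := by linarith
  have e : dl s x = (6500 + (-276077/8) * x ^ 1 + (2440849/32) * x ^ 2 + (-2941657/32) * x ^ 3 + (1098565/16) * x ^ 4 + (-1268501/32) * x ^ 5 + (336951/32) * x ^ 6 + (-2727) * x ^ 7 + (675/2) * x ^ 8) + ((-2470991/165888) * x ^ 1 + (13864939/165888) * x ^ 2 + (-16552987/82944) * x ^ 3 + (22227595/82944) * x ^ 4 + (-8186999/41472) * x ^ 5 + (44935/576) * x ^ 6 + (-2909/144) * x ^ 7 + (5/2) * x ^ 8) * s := by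
    simp only [dl, pu, pl]
    ring
  have eh1 : (6500 + (-276077/8) * x ^ 1 + (2440849/32) * x ^ 2 + (-2941657/32) * x ^ 3 + (1098565/16) * x ^ 4 + (-1268501/32) * x ^ 5 + (336951/32) * x ^ 6 + (-2727) * x ^ 7 + (675/2) * x ^ 8) + ((-2470991/165888) * x ^ 1 + (13864939/165888) * x ^ 2 + (-16552987/82944) * x ^ 3 + (22227595/82944) * x ^ 4 + (-8186999/41472) * x ^ 5 + (44935/576) * x ^ 6 + (-2909/144) * x ^ 7 + (5/2) * x ^ 8) * (1350999/10000) = (3704437284063168039/1280000) + (29665525327756519767/20480000) * (x - 17) ^ 1 + (6492056456504400531/20480000) * (x - 17) ^ 2 + (405773416951987907/10240000) * (x - 17) ^ 3 + (6339397213888791/2048000) * (x - 17) ^ 4 + (792315617983407/5120000) * (x - 17) ^ 5 + (3094977063141/640000) * (x - 17) ^ 6 + (13820441661/160000) * (x - 17) ^ 7 + (2700999/4000) * (x - 17) ^ 8 := by ring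
  have h1 : (0:ℝ) < (6500 + (-276077/8) * x ^ 1 + (2440849/32) * x ^ 2 + (-2941657/32) * x ^ 3 + (1098565/16) * x ^ 4 + (-1268501/32) * x ^ 5 + (336951/32) * x ^ 6 + (-2727) * x ^ 7 + (675/2) * x ^ 8) + ((-2470991/165888) * x ^ 1 + (13864939/165888) * x ^ 2 + (-16552987/82944) * x ^ 3 + (22227595/82944) * x ^ 4 + (-8186999/41472) * x ^ 5 + (44935/576) * x ^ 6 + (-2909/144) * x ^ 7 + (5/2) * x ^ 8) * (1350999/10000) := by
    rw [eh1]
    linarith [hy, pow_nonneg hy 2, pow_nonneg hy 3, pow_nonneg hy 4, pow_nonneg hy 5, pow_nonneg hy 6, pow_nonneg hy 7, pow_nonneg hy 8]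
  have eh2 : (6500 + (-276077/8) * x ^ 1 + (2440849/32) * x ^ 2 + (-2941657/32) * x ^ 3 + (1098565/16) * x ^ 4 + (-1268501/32) * x ^ 5 + (336951/32) * x ^ 6 + (-2727) * x ^ 7 + (675/2) * x ^ 8) + ((-2470991/165888) * x ^ 1 + (13864939/165888) * x ^ 2 + (-16552987/82944) * x ^ 3 + (22227595/82944) * x ^ 4 + (-8186999/41472) * x ^ 5 + (44935/576) * x ^ 6 + (-2909/144) * x ^ 7 + (5/2) * x ^ 8) * (1351/10) = (100019843905124717/34560) + (2402908444148446583/1658880) * (x - 17) ^ 1 + (58428529780437211/184320) * (x - 17) ^ 2 + (3651962105841227/92160) * (x - 17) ^ 3 + (171163788166973/55296) * (x - 17) ^ 4 + (64177588819183/414720) * (x - 17) ^ 5 + (3094978209/640) * (x - 17) ^ 6 + (124384021/1440) * (x - 17) ^ 7 + (2701/4) * (x - 17) ^ 8 := by ring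
  have h2 : (0:ℝ) < (6500 + (-276077/8) * x ^ 1 + (2440849/32) * x ^ 2 + (-2941657/32) * x ^ 3 + (1098565/16) * x ^ 4 + (-1268501/32) * x ^ 5 + (336951/32) * x ^ 6 + (-2727) * x ^ 7 + (675/2) * x ^ 8) + ((-2470991/165888) * x ^ 1 + (13864939/165888) * x ^ 2 + (-16552987/82944) * x ^ 3 + (22227595/82944) * x ^ 4 + (-8186999/41472) * x ^ 5 + (44935/576) * x ^ 6 + (-2909/144) * x ^ 7 + (5/2) * x ^ 8) * (1351/10) := by
    rw [eh2]
    linarith [hy, pow_nonneg hy 2, pow_nonneg hy 3, pow_nonneg hy 4, pow_nonneg hy 5, pow_nonneg hy 6, pow_nonneg hy 7, pow_nonneg hy 8]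
  have t1 : (0:ℝ) < (1351/10 - s) * ((6500 + (-276077/8) * x ^ 1 + (2440849/32) * x ^ 2 + (-2941657/32) * x ^ 3 + (1098565/16) * x ^ 4 + (-1268501/32) * x ^ 5 + (336951/32) * x ^ 6 + (-2727) * x ^ 7 + (675/2) * x ^ 8) + ((-2470991/165888) * x ^ 1 + (13864939/165888) * x ^ 2 + (-16552987/82944) * x ^ 3 + (22227595/82944) * x ^ 4 + (-8186999/41472) * x ^ 5 + (44935/576) * x ^ 6 + (-2909/144) * x ^ 7 + (5/2) * x ^ 8) * (1350999/10000)) := mul_pos (by linarith) h1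
  have t2 : (0:ℝ) < (s - 1350999/10000) * ((6500 + (-276077/8) * x ^ 1 + (2440849/32) * x ^ 2 + (-2941657/32) * x ^ 3 + (1098565/16) * x ^ 4 + (-1268501/32) * x ^ 5 + (336951/32) * x ^ 6 + (-2727) * x ^ 7 + (675/2) * x ^ 8) + ((-2470991/165888) * x ^ 1 + (13864939/165888) * x ^ 2 + (-16552987/82944) * x ^ 3 + (22227595/82944) * x ^ 4 + (-8186999/41472) * x ^ 5 + (44935/576) * x ^ 6 + (-2909/144) * x ^ 7 + (5/2) * x ^ 8) * (1351/10)) := mul_pos (by linarith) h2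
  linarith [t1, t2, e]

lemma A1_ge (s x : ℝ) (hs2 : s^2 = 18252) (hlo : (1350999/10000:ℝ) < s)
    (hhi : s < 1351/10) (hx : (17:ℝ) ≤ x) : pl s x * (x+1)^5 * pu s (x-1) ≤ (3*(2*x+1)*(3*x^2+3*x+1)*(15*x^2+15*x+4)) * x^5 * pu s (x-1) + (3*x^3*(3*x-1)*(3*x+1)) * (x-1)^5 * x^5 := by
  have hy : (0:ℝ) ≤ x - 17 := by linarith
  have e : ((3*(2*x+1)*(3*x^2+3*x+1)*(15*x^2+15*x+4)) * x^5 * pu s (x-1) + (3*x^3*(3*x-1)*(3*x+1)) * (x-1)^5 * x^5) - pl s x * (x+1)^5 * pu s (x-1) = ((109250375/8) + (32753043960693097/254803968) * x ^ 1 + (22757153246846905/63700992) * x ^ 2 + (103852679493671309/254803968) * x ^ 3 + (76527834622697/442368) * x ^ 4 + (1623340940295283/254803968) * x ^ 5 + (564636727926023/63700992) * x ^ 6 + (1394073759020567/254803968) * x ^ 7 + (-1158875706485/442368) * x ^ 8 + (733033162109/221184) * x ^ 9 + (470271243/512) * x ^ 10) + ((-8787556375/41472) + (-3254719280005/5308416)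 * x ^ 1 + (-1285107775477/2654208) * x ^ 2 + (-588920100065/5308416) * x ^ 3 + (-751434548999/2654208) * x ^ 4 + (-1413044238935/5308416) * x ^ 5 + (53550138443/884736) * x ^ 6 + (39522711119/1769472) * x ^ 7 + (-47064307703/884736) * x ^ 8 + (-97844225/12288) * x ^ 9 + (-4746845/768) * x ^ 10) * s := by
    simp only [pu, pl]
    linear_combination (((13362444747457/27518828544) * x ^ 1 + (8164368317329/6879707136) * x ^ 2 + (3559279591493/27518828544) * x ^ 3 + (-66296083087/47775744) * x ^ 4 + (-15126091051589/27518828544) * x ^ 5 + (2107979474735/6879707136) * x ^ 6 + (-3509780843329/27518828544) * x ^ 7 + (-2991780701/47775744) * x ^ 8 + (1607518349/23887872) * x ^ 9 + (-969919/18432) * x ^ 10 + (5699/1152) * x ^ 11 + (685/144) * x ^ 12 + (-1289/144) * x ^ 13 + 5 * x ^ 14 + (-1) * x ^ 15)) * hs2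
  have eh1 : ((109250375/8) + (32753043960693097/254803968) * x ^ 1 + (22757153246846905/63700992) * x ^ 2 + (103852679493671309/254803968) * x ^ 3 + (76527834622697/442368) * x ^ 4 + (1623340940295283/254803968) * x ^ 5 + (564636727926023/63700992) * x ^ 6 + (1394073759020567/254803968) * x ^ 7 + (-1158875706485/442368) * x ^ 8 + (733033162109/221184) * x ^ 9 + (470271243/512) * x ^ 10) + ((-8787556375/41472) + (-3254719280005/5308416) * x ^ 1 + (-1285107775477/2654208) * x ^ 2 + (-588920100065/5308416) * x ^ 3 + (-751434548999/2654208) * x ^ 4 + (-1413044238935/5308416) * x ^ 5 + (53550138443/884736) * x ^ 6 + (39522711119/1769472) * x ^ 7 + (-47064307703/884736) * x ^ 8 + (-97844225/12288) * x ^ 9 + (-4746845/768) * x ^ 10) * (1350999/10000) = (29535085480442987518137/80000) + (534782236237365860811867/2560000) * (x - 17) ^ 1 + (270924370631673785184021/5120000) * (x - 17) ^ 2 + (1515933603839013574627/192000) * (x - 17) ^ 3 + (849096860247215055778741/1105920000) * (x - 17) ^ 4 + (16173295156395738636767/318504960) * (x - 17) ^ 5 + (12259975561334051190109/5308416000) *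 (x - 17) ^ 6 + (1416876409530150553231/19906560000) * (x - 17) ^ 7 + (12547818202434864503/8847360000) * (x - 17) ^ 8 + (145354072529069/8847360) * (x - 17) ^ 9 + (42739053123/512000) * (x - 17) ^ 10 := by ring
  have h1 : (0:ℝ) < ((109250375/8) + (32753043960693097/254803968) * x ^ 1 + (22757153246846905/63700992) * x ^ 2 + (103852679493671309/254803968) * x ^ 3 + (76527834622697/442368) * x ^ 4 + (1623340940295283/254803968) * x ^ 5 + (564636727926023/63700992) * x ^ 6 + (1394073759020567/254803968) * x ^ 7 + (-1158875706485/442368) * x ^ 8 + (733033162109/221184) * x ^ 9 + (470271243/512) * x ^ 10) + ((-8787556375/41472) + (-3254719280005/5308416) * x ^ 1 + (-1285107775477/2654208) * x ^ 2 + (-588920100065/5308416) * x ^ 3 + (-751434548999/2654208) * x ^ 4 + (-1413044238935/5308416) * x ^ 5 + (53550138443/884736) * x ^ 6 + (39522711119/1769472) * x ^ 7 + (-47064307703/884736) * x ^ 8 + (-97844225/12288) * x ^ 9 + (-4746845/768) * x ^ 10) * (1350999/10000) := by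
    rw [eh1]
    linarith [hy, pow_nonneg hy 2, pow_nonneg hy 3, pow_nonneg hy 4, pow_nonneg hy 5, pow_nonneg hy 6, pow_nonneg hy 7, pow_nonneg hy 8, pow_nonneg hy 9, pow_nonneg hy 10]
  have eh2 : ((109250375/8) + (32753043960693097/254803968) * x ^ 1 + (22757153246846905/63700992) * x ^ 2 + (103852679493671309/254803968) * x ^ 3 + (76527834622697/442368) * x ^ 4 + (1623340940295283/254803968) * x ^ 5 + (564636727926023/63700992) * x ^ 6 + (1394073759020567/254803968) * x ^ 7 + (-1158875706485/442368) * x ^ 8 + (733033162109/221184) * x ^ 9 + (470271243/512) * x ^ 10) + ((-8787556375/41472) + (-3254719280005/5308416) * x ^ 1 + (-1285107775477/2654208) * x ^ 2 + (-588920100065/5308416) * x ^ 3 + (-751434548999/2654208) * x ^ 4 + (-1413044238935/5308416) * x ^ 5 + (53550138443/884736) * x ^ 6 + (39522711119/1769472) * x ^ 7 + (-47064307703/884736) * x ^ 8 + (-97844225/12288) * x ^ 9 + (-4746845/768) * x ^ 10) * (1351/10) = (102072874830377539056523/276480) + (308033388421142066953553/1474560) * (x - 17) ^ 1 + (468155460650834191404437/8847360)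 * (x - 17) ^ 2 + (6985393323554485207795/884736) * (x - 17) ^ 3 + (13585491263123260185689/17694720) * (x - 17) ^ 4 + (6469288635248263322183/127401984) * (x - 17) ^ 5 + (196158656683724439463/84934656) * (x - 17) ^ 6 + (90679614490889106811/1274019840) * (x - 17) ^ 7 + (1394193995714003/983040) * (x - 17) ^ 8 + (1816914198277/110592) * (x - 17) ^ 9 + (64108105/768) * (x - 17) ^ 10 := by ring
  have h2 : (0:ℝ) < ((109250375/8) + (32753043960693097/254803968) * x ^ 1 + (22757153246846905/63700992) * x ^ 2 + (103852679493671309/254803968) * x ^ 3 + (76527834622697/442368) * x ^ 4 + (1623340940295283/254803968) * x ^ 5 + (564636727926023/63700992) * x ^ 6 + (1394073759020567/254803968) * x ^ 7 + (-1158875706485/442368) * x ^ 8 + (733033162109/221184) * x ^ 9 + (470271243/512) * x ^ 10) + ((-8787556375/41472) + (-3254719280005/5308416) * x ^ 1 + (-1285107775477/2654208) * x ^ 2 + (-588920100065/5308416) * x ^ 3 + (-751434548999/2654208) * x ^ 4 + (-1413044238935/5308416) * x ^ 5 + (53550138443/884736) * x ^ 6 + (39522711119/1769472) * x ^ 7 +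 (-47064307703/884736) * x ^ 8 + (-97844225/12288) * x ^ 9 + (-4746845/768) * x ^ 10) * (1351/10) := by
    rw [eh2]
    linarith [hy, pow_nonneg hy 2, pow_nonneg hy 3, pow_nonneg hy 4, pow_nonneg hy 5, pow_nonneg hy 6, pow_nonneg hy 7, pow_nonneg hy 8, pow_nonneg hy 9, pow_nonneg hy 10]
  have t1 : (0:ℝ) < (1351/10 - s) * (((109250375/8) + (32753043960693097/254803968) * x ^ 1 + (22757153246846905/63700992) * x ^ 2 + (103852679493671309/254803968) * x ^ 3 + (76527834622697/442368) * x ^ 4 + (1623340940295283/254803968) * x ^ 5 + (564636727926023/63700992) * x ^ 6 + (1394073759020567/254803968) * x ^ 7 + (-1158875706485/442368) * x ^ 8 + (733033162109/221184) * x ^ 9 + (470271243/512) * x ^ 10) + ((-8787556375/41472) + (-3254719280005/5308416) * x ^ 1 + (-1285107775477/2654208) * x ^ 2 + (-588920100065/5308416) * x ^ 3 + (-751434548999/2654208) * x ^ 4 + (-1413044238935/5308416) * x ^ 5 + (53550138443/884736) * x ^ 6 + (39522711119/1769472) * x ^ 7 + (-47064307703/884736) * x ^ 8 + (-97844225/12288)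 * x ^ 9 + (-4746845/768) * x ^ 10) * (1350999/10000)) := mul_pos (by linarith) h1
  have t2 : (0:ℝ) < (s - 1350999/10000) * (((109250375/8) + (32753043960693097/254803968) * x ^ 1 + (22757153246846905/63700992) * x ^ 2 + (103852679493671309/254803968) * x ^ 3 + (76527834622697/442368) * x ^ 4 + (1623340940295283/254803968) * x ^ 5 + (564636727926023/63700992) * x ^ 6 + (1394073759020567/254803968) * x ^ 7 + (-1158875706485/442368) * x ^ 8 + (733033162109/221184) * x ^ 9 + (470271243/512) * x ^ 10) + ((-8787556375/41472) + (-3254719280005/5308416) * x ^ 1 + (-1285107775477/2654208) * x ^ 2 + (-588920100065/5308416) * x ^ 3 + (-751434548999/2654208) * x ^ 4 + (-1413044238935/5308416) * x ^ 5 + (53550138443/884736) * x ^ 6 + (39522711119/1769472) * x ^ 7 + (-47064307703/884736) * x ^ 8 + (-97844225/12288) * x ^ 9 + (-4746845/768) * x ^ 10) * (1351/10)) := mul_pos (by linarith) h2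
  linarith [t1, t2, e]

lemma A2_ge (s x : ℝ) (hs2 : s^2 = 18252) (hlo : (1350999/10000:ℝ) < s)
    (hhi : s < 1351/10) (hx : (17:ℝ) ≤ x) : (3*(2*x+1)*(3*x^2+3*x+1)*(15*x^2+15*x+4)) * x^5 * pl s (x-1) + (3*x^3*(3*x-1)*(3*x+1)) * (x-1)^5 * x^5 ≤ pu s x * (x+1)^5 * pl s (x-1) := by
  have hy : (0:ℝ) ≤ x - 17 := by linarith
  have e : pu s x * (x+1)^5 * pl s (x-1) - ((3*(2*x+1)*(3*x^2+3*x+1)*(15*x^2+15*x+4)) * x^5 * pl s (x-1) + (3*x^3*(3*x-1)*(3*x+1)) * (x-1)^5 * x^5) = ((-566749625/8) + (-83923278459765097/254803968) * x ^ 1 + (-36581876960894905/63700992) * x ^ 2 + (-113855248136231309/254803968) * x ^ 3 + (-65613026302697/442368) * x ^ 4 + (-9674151001095283/254803968) * x ^ 5 + (-813225867894023/63700992) * x ^ 6 + (4195688288979433/254803968) * x ^ 7 + (1314146874485/442368) * x ^ 8 + (-733033162109/221184) * x ^ 9 + (1326848757/512) * x ^ 10) + ((-8787556375/41472) + (-4645917359995/5308416)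 * x ^ 1 + (-2984987040523/2654208) * x ^ 2 + (-958795419935/5308416) * x ^ 3 + (1236408388999/2654208) * x ^ 4 + (165024686935/5308416) * x ^ 5 + (-88094778443/884736) * x ^ 6 + (183559784881/1769472) * x ^ 7 + (-10443532297/884736) * x ^ 8 + (-700875775/12288) * x ^ 9 + (4746845/768) * x ^ 10) * s := by
    simp only [pu, pl]
    linear_combination (((-13362444747457/27518828544) * x ^ 1 + (-8164368317329/6879707136) * x ^ 2 + (-3559279591493/27518828544) * x ^ 3 + (66296083087/47775744) * x ^ 4 + (15126091051589/27518828544) * x ^ 5 + (-2107979474735/6879707136) * x ^ 6 + (3509780843329/27518828544) * x ^ 7 + (2991780701/47775744) * x ^ 8 + (-1607518349/23887872) * x ^ 9 + (969919/18432) * x ^ 10 + (-5699/1152) * x ^ 11 + (-685/144) * x ^ 12 + (1289/144) * x ^ 13 + (-5) * x ^ 14 + 1 * x ^ 15)) * hs2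
  have eh1 : ((-566749625/8) + (-83923278459765097/254803968) * x ^ 1 + (-36581876960894905/63700992) * x ^ 2 + (-113855248136231309/254803968) * x ^ 3 + (-65613026302697/442368) * x ^ 4 + (-9674151001095283/254803968) * x ^ 5 + (-813225867894023/63700992) * x ^ 6 + (4195688288979433/254803968) * x ^ 7 + (1314146874485/442368) * x ^ 8 + (-733033162109/221184) * x ^ 9 + (1326848757/512) * x ^ 10) + ((-8787556375/41472) + (-4645917359995/5308416) * x ^ 1 + (-2984987040523/2654208) * x ^ 2 + (-958795419935/5308416) * x ^ 3 + (1236408388999/2654208) * x ^ 4 + (165024686935/5308416) * x ^ 5 + (-88094778443/884736) * x ^ 6 + (183559784881/1769472) * x ^ 7 + (-10443532297/884736) * x ^ 8 + (-700875775/12288) * x ^ 9 + (4746845/768) * x ^ 10) * (1350999/10000) = (224897810937083347123119/40000) + (8655418617180187222562133/2560000) * (x - 17) ^ 1 + (4682924715910520919707979/5120000) * (x - 17) ^ 2 + (14071363666372064981749/96000) * (x - 17) ^ 3 + (17042634875991919208881259/1105920000) * (x - 17) ^ 4 + (353736654690769329824353/318504960) * (x - 17) ^ 5 + (294968240293908513622691/5308416000)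 * (x - 17) ^ 6 + (37936110710984475238769/19906560000) * (x - 17) ^ 7 + (379350867901772495497/8847360000) * (x - 17) ^ 8 + (5056172605138771/8847360) * (x - 17) ^ 9 + (1754380946877/512000) * (x - 17) ^ 10 := by ring
  have h1 : (0:ℝ) < ((-566749625/8) + (-83923278459765097/254803968) * x ^ 1 + (-36581876960894905/63700992) * x ^ 2 + (-113855248136231309/254803968) * x ^ 3 + (-65613026302697/442368) * x ^ 4 + (-9674151001095283/254803968) * x ^ 5 + (-813225867894023/63700992) * x ^ 6 + (4195688288979433/254803968) * x ^ 7 + (1314146874485/442368) * x ^ 8 + (-733033162109/221184) * x ^ 9 + (1326848757/512) * x ^ 10) + ((-8787556375/41472) + (-4645917359995/5308416) * x ^ 1 + (-2984987040523/2654208) * x ^ 2 + (-958795419935/5308416) * x ^ 3 + (1236408388999/2654208) * x ^ 4 + (165024686935/5308416) * x ^ 5 + (-88094778443/884736) * x ^ 6 + (183559784881/1769472) * x ^ 7 + (-10443532297/884736) * x ^ 8 + (-700875775/12288) * x ^ 9 + (4746845/768) * x ^ 10) * (1350999/10000) := by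
    rw [eh1]
    linarith [hy, pow_nonneg hy 2, pow_nonneg hy 3, pow_nonneg hy 4, pow_nonneg hy 5, pow_nonneg hy 6, pow_nonneg hy 7, pow_nonneg hy 8, pow_nonneg hy 9, pow_nonneg hy 10]
  have eh2 : ((-566749625/8) + (-83923278459765097/254803968) * x ^ 1 + (-36581876960894905/63700992) * x ^ 2 + (-113855248136231309/254803968) * x ^ 3 + (-65613026302697/442368) * x ^ 4 + (-9674151001095283/254803968) * x ^ 5 + (-813225867894023/63700992) * x ^ 6 + (4195688288979433/254803968) * x ^ 7 + (1314146874485/442368) * x ^ 8 + (-733033162109/221184) * x ^ 9 + (1326848757/512) * x ^ 10) + ((-8787556375/41472) + (-4645917359995/5308416) * x ^ 1 + (-2984987040523/2654208) * x ^ 2 + (-958795419935/5308416) * x ^ 3 + (1236408388999/2654208) * x ^ 4 + (165024686935/5308416) * x ^ 5 + (-88094778443/884736) * x ^ 6 + (183559784881/1769472) * x ^ 7 + (-10443532297/884736) * x ^ 8 + (-700875775/12288) * x ^ 9 + (4746845/768) * x ^ 10) * (1351/10) = (1554493825529620997663477/276480) + (4985521673020681918582447/1474560) * (x - 17) ^ 1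 + (8092094875783019942099563/8847360) * (x - 17) ^ 2 + (129681704187136570984205/884736) * (x - 17) ^ 3 + (272682195305759663654311/17694720) * (x - 17) ^ 4 + (141494682370708010469817/127401984) * (x - 17) ^ 5 + (4719492564822811803737/84934656) * (x - 17) ^ 6 + (2427911473955009645189/1274019840) * (x - 17) ^ 7 + (42150103476285997/983040) * (x - 17) ^ 8 + (63202168553723/110592) * (x - 17) ^ 9 + (2631571895/768) * (x - 17) ^ 10 := by ring
  have h2 : (0:ℝ) < ((-566749625/8) + (-83923278459765097/254803968) * x ^ 1 + (-36581876960894905/63700992) * x ^ 2 + (-113855248136231309/254803968) * x ^ 3 + (-65613026302697/442368) * x ^ 4 + (-9674151001095283/254803968) * x ^ 5 + (-813225867894023/63700992) * x ^ 6 + (4195688288979433/254803968) * x ^ 7 + (1314146874485/442368) * x ^ 8 + (-733033162109/221184) * x ^ 9 + (1326848757/512) * x ^ 10) + ((-8787556375/41472) + (-4645917359995/5308416) * x ^ 1 + (-2984987040523/2654208) * x ^ 2 + (-958795419935/5308416) * x ^ 3 + (1236408388999/2654208) * x ^ 4 + (165024686935/5308416) * x ^ 5 + (-88094778443/884736) *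 x ^ 6 + (183559784881/1769472) * x ^ 7 + (-10443532297/884736) * x ^ 8 + (-700875775/12288) * x ^ 9 + (4746845/768) * x ^ 10) * (1351/10) := by
    rw [eh2]
    linarith [hy, pow_nonneg hy 2, pow_nonneg hy 3, pow_nonneg hy 4, pow_nonneg hy 5, pow_nonneg hy 6, pow_nonneg hy 7, pow_nonneg hy 8, pow_nonneg hy 9, pow_nonneg hy 10]
  have t1 : (0:ℝ) < (1351/10 - s) * (((-566749625/8) + (-83923278459765097/254803968) * x ^ 1 + (-36581876960894905/63700992) * x ^ 2 + (-113855248136231309/254803968) * x ^ 3 + (-65613026302697/442368) * x ^ 4 + (-9674151001095283/254803968) * x ^ 5 + (-813225867894023/63700992) * x ^ 6 + (4195688288979433/254803968) * x ^ 7 + (1314146874485/442368) * x ^ 8 + (-733033162109/221184) * x ^ 9 + (1326848757/512) * x ^ 10) + ((-8787556375/41472) + (-4645917359995/5308416) * x ^ 1 + (-2984987040523/2654208) * x ^ 2 + (-958795419935/5308416) * x ^ 3 + (1236408388999/2654208) * x ^ 4 + (165024686935/5308416) * x ^ 5 + (-88094778443/884736) * x ^ 6 + (183559784881/1769472) * x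 ^ 7 + (-10443532297/884736) * x ^ 8 + (-700875775/12288) * x ^ 9 + (4746845/768) * x ^ 10) * (1350999/10000)) := mul_pos (by linarith) h1
  have t2 : (0:ℝ) < (s - 1350999/10000) * (((-566749625/8) + (-83923278459765097/254803968) * x ^ 1 + (-36581876960894905/63700992) * x ^ 2 + (-113855248136231309/254803968) * x ^ 3 + (-65613026302697/442368) * x ^ 4 + (-9674151001095283/254803968) * x ^ 5 + (-813225867894023/63700992) * x ^ 6 + (4195688288979433/254803968) * x ^ 7 + (1314146874485/442368) * x ^ 8 + (-733033162109/221184) * x ^ 9 + (1326848757/512) * x ^ 10) + ((-8787556375/41472) + (-4645917359995/5308416) * x ^ 1 + (-2984987040523/2654208) * x ^ 2 + (-958795419935/5308416) * x ^ 3 + (1236408388999/2654208) * x ^ 4 + (165024686935/5308416) * x ^ 5 + (-88094778443/884736) * x ^ 6 + (183559784881/1769472) * x ^ 7 + (-10443532297/884736) * x ^ 8 + (-700875775/12288) * x ^ 9 + (4746845/768) * x ^ 10) * (1351/10)) := mul_pos (by linarith) h2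
  linarith [t1, t2, e]

lemma F_ge (s x : ℝ) (hs2 : s^2 = 18252) (hlo : (1350999/10000:ℝ) < s)
    (hhi : s < 1351/10) (hx : (17:ℝ) ≤ x) : pu s (x-1) * (du s (x+1))^2 * (x+2)^5 ≤ pl s (x+1) * dl s x * dl s (x+2) * x^5 := by
  have hy : (0:ℝ) ≤ x - 17 := by linarith
  have e : pl s (x+1) * dl s x * dl s (x+2) * x^5 - pu s (x-1) * (du s (x+1))^2 * (x+2)^5 = ((-2840509750000) + (-48776864429470282625/995328) * x ^ 1 + (-9896694009878282590391/28311552) * x ^ 2 + (-728769301437643740517783/509607936) * x ^ 3 + (-1950305402911582515159905/509607936) * x ^ 4 + (-2434331217894605569899133/339738624) * x ^ 5 + (-314076318974027409630193/31850496) * x ^ 6 + (-6948948586303338743296495/679477248) * x ^ 7 + (-1893325843240016052491111/226492416) * x ^ 8 + (-11394779245040530788974057/2038431744) * x ^ 9 + (-6200654718887134679752193/2038431744) * x ^ 10 + (-2733817525953824483677849/2038431744) * x ^ 11 + (-341832429478725015805763/679477248) * x ^ 12 + (-335852071652121398673253/2038431744) * x ^ 13 + (-28769740693454898960865/679477248)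 * x ^ 14 + (-2407246668210967891211/339738624) * x ^ 15 + (182134525259223692041/254803968) * x ^ 16 + (6140702482263839053/3538944) * x ^ 17 + (16000646549680627/32768) * x ^ 18 + (-5826533935414267/24576) * x ^ 19 + (-79658076149595/512) * x ^ 20 + (-3618197536875/64) * x ^ 21 + (-1519425283899/64) * x ^ 22 + (-19383279615/4) * x ^ 23 + (1724176125/4) * x ^ 24) + ((14279779109375/324) + (3117058882169375/6912) * x ^ 1 + (2815947498315709559935847/1320903770112) * x ^ 2 + (16530086682729663404878081/2641807540224) * x ^ 3 + (1433616625023991245635407/110075314176) * x ^ 4 + (110907438821725216307452223/5283615080448) * x ^ 5 + (73145828103280783513102889/2641807540224) * x ^ 6 + (79684550360060176262341285/2641807540224) * x ^ 7 + (45548344288154663472625633/1761205026816) * x ^ 8 + (9866609101818478798497031/587068342272) * x ^ 9 + (10807465205189970554746937/1320903770112) * x ^ 10 + (3592275745783465980813937/1320903770112) * x ^ 11 + (1482560681682742318479301/5283615080448) * x ^ 12 + (-699076284289840821656095/2641807540224) * x ^ 13 + (-132942481207363930969175/880602513408) * x ^ 14 + (-11958297940695851564501/330225942528) * x ^ 15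 + (449707503921886843/84934656) * x ^ 16 + (4910518487211161887/382205952) * x ^ 17 + (38386373227468253/10616832) * x ^ 18 + (-2328889840304537/1327104) * x ^ 19 + (-42452867831885/36864) * x ^ 20 + (-11569662419305/27648) * x ^ 21 + (-22493343501/128) * x ^ 22 + (-1147788585/32) * x ^ 23 + (12762225/4) * x ^ 24) * s := by
    simp only [dl, du, pu, pl]
    linear_combination (((-21713972714617625/107495424) * x ^ 1 + (-5996467900493154911/3057647616) * x ^ 2 + (-465206827210191047743/55037657088) * x ^ 3 + (-1164512820176591265785/55037657088) * x ^ 4 + (-1232447542795233817525/36691771392) * x ^ 5 + (-118481911458474605833/3439853568) * x ^ 6 + (-1644832607411983640791/73383542784) * x ^ 7 + (-208556201208346525583/24461180928) * x ^ 8 + (-84215355390403881281/220150628352) * x ^ 9 + (722932389692316801127/220150628352) * x ^ 10 + (937822309132521674639/220150628352) * x ^ 11 + (220472219737670750197/73383542784) * x ^ 12 + (290356355690724339107/220150628352) * x ^ 13 + (33053760104628241799/73383542784) * x ^ 14 + (4848934614571208557/36691771392) * x ^ 15 + (1091177140609576609/27518828544) * x ^ 16 + (10633194963489469/382205952) * x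 ^ 17 + (14599793975293/3538944) * x ^ 18 + (-26172229588483/2654208) * x ^ 19 + (-68100169051/12288) * x ^ 20 + (-937914647/576) * x ^ 21 + (-756209561/1152) * x ^ 22 + (-2148355/16) * x ^ 23 + (70875/4) * x ^ 24) + ((33018480708963519887/142657607172096) * x ^ 2 + (616315700157805401241/285315214344192) * x ^ 3 + (104178799300418378551/11888133931008) * x ^ 4 + (11303638121654908079015/570630428688384) * x ^ 5 + (7292463726427408377473/285315214344192) * x ^ 6 + (3909585400106404274461/285315214344192) * x ^ 7 + (-2034783045866201911943/190210142896128) * x ^ 8 + (-1653437767505888904401/63403380965376) * x ^ 9 + (-3196508329643939659951/142657607172096) * x ^ 10 + (-1486866207183812373431/142657607172096) * x ^ 11 + (-1374559207844606687555/570630428688384) * x ^ 12 + (56604225037259710457/285315214344192) * x ^ 13 + (71580874226832753793/95105071448064) * x ^ 14 + (22487014410977184211/35664401793024) * x ^ 15 + (2186997132529729/9172942848) * x ^ 16 + (1051134232684729/41278242816) * x ^ 17 + (-25672815622741/1146617856) * x ^ 18 + (-3573983321459/143327232) * x ^ 19 + (-2355100991/248832) * x ^ 20 + (-868563827/1492992)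 * x ^ 21 + (-2999/72) * x ^ 22 + (-1015/96) * x ^ 23 + (175/4) * x ^ 24) * s) * hs2
  have eh1 : ((-2840509750000) + (-48776864429470282625/995328) * x ^ 1 + (-9896694009878282590391/28311552) * x ^ 2 + (-728769301437643740517783/509607936) * x ^ 3 + (-1950305402911582515159905/509607936) * x ^ 4 + (-2434331217894605569899133/339738624) * x ^ 5 + (-314076318974027409630193/31850496) * x ^ 6 + (-6948948586303338743296495/679477248) * x ^ 7 + (-1893325843240016052491111/226492416) * x ^ 8 + (-11394779245040530788974057/2038431744) * x ^ 9 + (-6200654718887134679752193/2038431744) * x ^ 10 + (-2733817525953824483677849/2038431744) * x ^ 11 + (-341832429478725015805763/679477248) * x ^ 12 + (-335852071652121398673253/2038431744) * x ^ 13 + (-28769740693454898960865/679477248) * x ^ 14 + (-2407246668210967891211/339738624) * x ^ 15 + (182134525259223692041/254803968) * x ^ 16 + (6140702482263839053/3538944) * x ^ 17 + (16000646549680627/32768) * x ^ 18 + (-5826533935414267/24576) * x ^ 19 + (-79658076149595/512) * x ^ 20 + (-3618197536875/64) * x ^ 21 + (-1519425283899/64) * x ^ 22 + (-19383279615/4)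 * x ^ 23 + (1724176125/4) * x ^ 24) + ((14279779109375/324) + (3117058882169375/6912) * x ^ 1 + (2815947498315709559935847/1320903770112) * x ^ 2 + (16530086682729663404878081/2641807540224) * x ^ 3 + (1433616625023991245635407/110075314176) * x ^ 4 + (110907438821725216307452223/5283615080448) * x ^ 5 + (73145828103280783513102889/2641807540224) * x ^ 6 + (79684550360060176262341285/2641807540224) * x ^ 7 + (45548344288154663472625633/1761205026816) * x ^ 8 + (9866609101818478798497031/587068342272) * x ^ 9 + (10807465205189970554746937/1320903770112) * x ^ 10 + (3592275745783465980813937/1320903770112) * x ^ 11 + (1482560681682742318479301/5283615080448) * x ^ 12 + (-699076284289840821656095/2641807540224) * x ^ 13 + (-132942481207363930969175/880602513408) * x ^ 14 + (-11958297940695851564501/330225942528) * x ^ 15 + (449707503921886843/84934656) * x ^ 16 + (4910518487211161887/382205952) * x ^ 17 + (38386373227468253/10616832) * x ^ 18 + (-2328889840304537/1327104) * x ^ 19 + (-42452867831885/36864) * x ^ 20 + (-11569662419305/27648) * x ^ 21 + (-22493343501/128) * x ^ 22 + (-1147788585/32) * x ^ 23 + (12762225/4) * x ^ 24) * (1350999/10000)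 = (3869853798398119557615991739373189259352787362479/113246208000) + (5535650220476288343006084272097558799773419945786563/81537269760000) * (x - 17) ^ 1 + (44478859656208526969812882668666481075492701915839/754974720000) * (x - 17) ^ 2 + (3358103524745125854515704883982404024251545886132183/108716359680000) * (x - 17) ^ 3 + (1216658601664857271307638587048067091966509921075613/108716359680000) * (x - 17) ^ 4 + (1965368711743669558509702431711714804806827381379639/652298158080000) * (x - 17) ^ 5 + (205591997774624403862878427106520257443089420125681/326149079040000) * (x - 17) ^ 6 + (2295286601438083334132395136505628731651911223883/21743271936000) * (x - 17) ^ 7 + (3140316182675388483996931655014659248516818754153/217432719360000) * (x - 17) ^ 8 + (1068315000339311896450512983331370426646742836359/652298158080000) * (x - 17) ^ 9 + (25356768813520824976675306142166088901092273333/163074539520000) * (x - 17) ^ 10 + (225482081562054450763189378239002772180470827/18119393280000) * (x - 17) ^ 11 + (183296603665173898344064419463472945905394893/217432719360000) * (x - 17) ^ 12 + (3158746715173701571137728631049891414836001/65229815808000) * (x - 17) ^ 13 + (256329052513990506086440064808618515932999/108716359680000) * (x - 17) ^ 14 + (3956348768335864900747330934780621544781/40768634880000) * (x - 17) ^ 15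 + (1711799151816654597256982586681591617/509607936000) * (x - 17) ^ 16 + (13728999579563757269242784090934163/141557760000) * (x - 17) ^ 17 + (1815059841586392174635119450997/786432000) * (x - 17) ^ 18 + (21869059553634314496769758211/491520000) * (x - 17) ^ 19 + (27752907597817469935307913/40960000) * (x - 17) ^ 20 + (80343358654540962825747/10240000) * (x - 17) ^ 21 + (83106130423223242641/1280000) * (x - 17) ^ 22 + (21890573521350237/64000) * (x - 17) ^ 23 + (1379340578511/1600) * (x - 17) ^ 24 := by ring
  have h1 : (0:ℝ) < ((-2840509750000) + (-48776864429470282625/995328) * x ^ 1 + (-9896694009878282590391/28311552) * x ^ 2 + (-728769301437643740517783/509607936) * x ^ 3 + (-1950305402911582515159905/509607936) * x ^ 4 + (-2434331217894605569899133/339738624) * x ^ 5 + (-314076318974027409630193/31850496) * x ^ 6 + (-6948948586303338743296495/679477248) * x ^ 7 + (-1893325843240016052491111/226492416) * x ^ 8 + (-11394779245040530788974057/2038431744) * x ^ 9 + (-6200654718887134679752193/2038431744) * x ^ 10 + (-2733817525953824483677849/2038431744) * x ^ 11 + (-341832429478725015805763/679477248) * x ^ 12 + (-335852071652121398673253/2038431744)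 * x ^ 13 + (-28769740693454898960865/679477248) * x ^ 14 + (-2407246668210967891211/339738624) * x ^ 15 + (182134525259223692041/254803968) * x ^ 16 + (6140702482263839053/3538944) * x ^ 17 + (16000646549680627/32768) * x ^ 18 + (-5826533935414267/24576) * x ^ 19 + (-79658076149595/512) * x ^ 20 + (-3618197536875/64) * x ^ 21 + (-1519425283899/64) * x ^ 22 + (-19383279615/4) * x ^ 23 + (1724176125/4) * x ^ 24) + ((14279779109375/324) + (3117058882169375/6912) * x ^ 1 + (2815947498315709559935847/1320903770112) * x ^ 2 + (16530086682729663404878081/2641807540224) * x ^ 3 + (1433616625023991245635407/110075314176) * x ^ 4 + (110907438821725216307452223/5283615080448) * x ^ 5 + (73145828103280783513102889/2641807540224) * x ^ 6 + (79684550360060176262341285/2641807540224) * x ^ 7 + (45548344288154663472625633/1761205026816) * x ^ 8 + (9866609101818478798497031/587068342272) * x ^ 9 + (10807465205189970554746937/1320903770112) * x ^ 10 + (3592275745783465980813937/1320903770112) * x ^ 11 + (1482560681682742318479301/5283615080448) * x ^ 12 + (-699076284289840821656095/2641807540224) * x ^ 13 + (-132942481207363930969175/880602513408) * x ^ 14 +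 (-11958297940695851564501/330225942528) * x ^ 15 + (449707503921886843/84934656) * x ^ 16 + (4910518487211161887/382205952) * x ^ 17 + (38386373227468253/10616832) * x ^ 18 + (-2328889840304537/1327104) * x ^ 19 + (-42452867831885/36864) * x ^ 20 + (-11569662419305/27648) * x ^ 21 + (-22493343501/128) * x ^ 22 + (-1147788585/32) * x ^ 23 + (12762225/4) * x ^ 24) * (1350999/10000) := by
    rw [eh1]
    linarith [hy, pow_nonneg hy 2, pow_nonneg hy 3, pow_nonneg hy 4, pow_nonneg hy 5, pow_nonneg hy 6, pow_nonneg hy 7, pow_nonneg hy 8, pow_nonneg hy 9, pow_nonneg hy 10, pow_nonneg hy 11, pow_nonneg hy 12, pow_nonneg hy 13, pow_nonneg hy 14, pow_nonneg hy 15, pow_nonneg hy 16, pow_nonneg hy 17, pow_nonneg hy 18, pow_nonneg hy 19, pow_nonneg hy 20, pow_nonneg hy 21, pow_nonneg hy 22, pow_nonneg hy 23, pow_nonneg hy 24]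
  have eh2 : ((-2840509750000) + (-48776864429470282625/995328) * x ^ 1 + (-9896694009878282590391/28311552) * x ^ 2 + (-728769301437643740517783/509607936) * x ^ 3 + (-1950305402911582515159905/509607936) * x ^ 4 + (-2434331217894605569899133/339738624) * x ^ 5 + (-314076318974027409630193/31850496) * x ^ 6 + (-6948948586303338743296495/679477248) * x ^ 7 + (-1893325843240016052491111/226492416) * x ^ 8 + (-11394779245040530788974057/2038431744) * x ^ 9 + (-6200654718887134679752193/2038431744) * x ^ 10 + (-2733817525953824483677849/2038431744) * x ^ 11 + (-341832429478725015805763/679477248) * x ^ 12 + (-335852071652121398673253/2038431744) * x ^ 13 + (-28769740693454898960865/679477248) * x ^ 14 + (-2407246668210967891211/339738624) * x ^ 15 + (182134525259223692041/254803968) * x ^ 16 + (6140702482263839053/3538944) * x ^ 17 + (16000646549680627/32768) * x ^ 18 + (-5826533935414267/24576) * x ^ 19 + (-79658076149595/512) * x ^ 20 + (-3618197536875/64) * x ^ 21 + (-1519425283899/64) * x ^ 22 + (-19383279615/4) * x ^ 23 + (1724176125/4) * x ^ 24) + ((14279779109375/324) + (3117058882169375/6912) * x ^ 1 + (2815947498315709559935847/1320903770112)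 * x ^ 2 + (16530086682729663404878081/2641807540224) * x ^ 3 + (1433616625023991245635407/110075314176) * x ^ 4 + (110907438821725216307452223/5283615080448) * x ^ 5 + (73145828103280783513102889/2641807540224) * x ^ 6 + (79684550360060176262341285/2641807540224) * x ^ 7 + (45548344288154663472625633/1761205026816) * x ^ 8 + (9866609101818478798497031/587068342272) * x ^ 9 + (10807465205189970554746937/1320903770112) * x ^ 10 + (3592275745783465980813937/1320903770112) * x ^ 11 + (1482560681682742318479301/5283615080448) * x ^ 12 + (-699076284289840821656095/2641807540224) * x ^ 13 + (-132942481207363930969175/880602513408) * x ^ 14 + (-11958297940695851564501/330225942528) * x ^ 15 + (449707503921886843/84934656) * x ^ 16 + (4910518487211161887/382205952) * x ^ 17 + (38386373227468253/10616832) * x ^ 18 + (-2328889840304537/1327104) * x ^ 19 + (-42452867831885/36864) * x ^ 20 + (-11569662419305/27648) * x ^ 21 + (-22493343501/128) * x ^ 22 + (-1147788585/32) * x ^ 23 + (12762225/4) * x ^ 24) * (1351/10) = (34828697075572175866303182773233832822847509399/1019215872) + (49820870422820772910674798386582999693460879085963/733835427840) * (x - 17) ^ 1 + (97275302069375760154935994904379878958591072713317/1651129712640)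 * (x - 17) ^ 2 + (816019458518955381988622475821103474071495090412901/26418075402240) * (x - 17) ^ 3 + (32849794402541665818001609285071309907746864468479/2935341711360) * (x - 17) ^ 4 + (159194924568701244789068933132944955522623282339031/52836150804480) * (x - 17) ^ 5 + (16652957982943619109934918079715988695605309717009/26418075402240) * (x - 17) ^ 6 + (557754850572483905798791234818686662547238049313/5283615080448) * (x - 17) ^ 7 + (84788568312173555750425527210115520274640696579/5870683422720) * (x - 17) ^ 8 + (9614838561470205115749598390109750823615652079/5870683422720) * (x - 17) ^ 9 + (2053899034035653156048500437863101472634152837/13209037701120) * (x - 17) ^ 10 + (164376498293873236327433751796847271856571347/13209037701120) * (x - 17) ^ 11 + (44541091175130544811405808246245008571644231/52836150804480) * (x - 17) ^ 12 + (255858578621383416701012585107890762729697/5283615080448) * (x - 17) ^ 13 + (6920886979272390132320290326148568864557/2935341711360) * (x - 17) ^ 14 + (320464368837880385953797123443700140869/3302259425280) * (x - 17) ^ 15 + (5135399356042219559472463805968105/1528823808) * (x - 17) ^ 16 + (370683125836670569265446045529449/3822059520) * (x - 17) ^ 17 + (16335544620001926981388574741/7077888) * (x - 17) ^ 18 + (590464826476964645506815373/13271040)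 * (x - 17) ^ 19 + (249776260821622717753073/368640) * (x - 17) ^ 20 + (2169271486511914131761/276480) * (x - 17) ^ 21 + (83106161180504229/1280) * (x - 17) ^ 22 + (21890581622973/64) * (x - 17) ^ 23 + (6896705445/8) * (x - 17) ^ 24 := by ring
  have h2 : (0:ℝ) < ((-2840509750000) + (-48776864429470282625/995328) * x ^ 1 + (-9896694009878282590391/28311552) * x ^ 2 + (-728769301437643740517783/509607936) * x ^ 3 + (-1950305402911582515159905/509607936) * x ^ 4 + (-2434331217894605569899133/339738624) * x ^ 5 + (-314076318974027409630193/31850496) * x ^ 6 + (-6948948586303338743296495/679477248) * x ^ 7 + (-1893325843240016052491111/226492416) * x ^ 8 + (-11394779245040530788974057/2038431744) * x ^ 9 + (-6200654718887134679752193/2038431744) * x ^ 10 + (-2733817525953824483677849/2038431744) * x ^ 11 + (-341832429478725015805763/679477248) * x ^ 12 + (-335852071652121398673253/2038431744) * x ^ 13 + (-28769740693454898960865/679477248) * x ^ 14 + (-2407246668210967891211/339738624) * x ^ 15 + (182134525259223692041/254803968) * x ^ 16 + (6140702482263839053/3538944) * x ^ 17 + (16000646549680627/32768) * x ^ 18 +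 (-5826533935414267/24576) * x ^ 19 + (-79658076149595/512) * x ^ 20 + (-3618197536875/64) * x ^ 21 + (-1519425283899/64) * x ^ 22 + (-19383279615/4) * x ^ 23 + (1724176125/4) * x ^ 24) + ((14279779109375/324) + (3117058882169375/6912) * x ^ 1 + (2815947498315709559935847/1320903770112) * x ^ 2 + (16530086682729663404878081/2641807540224) * x ^ 3 + (1433616625023991245635407/110075314176) * x ^ 4 + (110907438821725216307452223/5283615080448) * x ^ 5 + (73145828103280783513102889/2641807540224) * x ^ 6 + (79684550360060176262341285/2641807540224) * x ^ 7 + (45548344288154663472625633/1761205026816) * x ^ 8 + (9866609101818478798497031/587068342272) * x ^ 9 + (10807465205189970554746937/1320903770112) * x ^ 10 + (3592275745783465980813937/1320903770112) * x ^ 11 + (1482560681682742318479301/5283615080448) * x ^ 12 + (-699076284289840821656095/2641807540224) * x ^ 13 + (-132942481207363930969175/880602513408) * x ^ 14 + (-11958297940695851564501/330225942528) * x ^ 15 + (449707503921886843/84934656) * x ^ 16 + (4910518487211161887/382205952) * x ^ 17 + (38386373227468253/10616832) * x ^ 18 + (-2328889840304537/1327104) * x ^ 19 + (-42452867831885/36864)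 * x ^ 20 + (-11569662419305/27648) * x ^ 21 + (-22493343501/128) * x ^ 22 + (-1147788585/32) * x ^ 23 + (12762225/4) * x ^ 24) * (1351/10) := by
    rw [eh2]
    linarith [hy, pow_nonneg hy 2, pow_nonneg hy 3, pow_nonneg hy 4, pow_nonneg hy 5, pow_nonneg hy 6, pow_nonneg hy 7, pow_nonneg hy 8, pow_nonneg hy 9, pow_nonneg hy 10, pow_nonneg hy 11, pow_nonneg hy 12, pow_nonneg hy 13, pow_nonneg hy 14, pow_nonneg hy 15, pow_nonneg hy 16, pow_nonneg hy 17, pow_nonneg hy 18, pow_nonneg hy 19, pow_nonneg hy 20, pow_nonneg hy 21, pow_nonneg hy 22, pow_nonneg hy 23, pow_nonneg hy 24]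
  have t1 : (0:ℝ) < (1351/10 - s) * (((-2840509750000) + (-48776864429470282625/995328) * x ^ 1 + (-9896694009878282590391/28311552) * x ^ 2 + (-728769301437643740517783/509607936) * x ^ 3 + (-1950305402911582515159905/509607936) * x ^ 4 + (-2434331217894605569899133/339738624) * x ^ 5 + (-314076318974027409630193/31850496) * x ^ 6 + (-6948948586303338743296495/679477248) * x ^ 7 + (-1893325843240016052491111/226492416) * x ^ 8 + (-11394779245040530788974057/2038431744) * x ^ 9 + (-6200654718887134679752193/2038431744) * x ^ 10 + (-2733817525953824483677849/2038431744) * x ^ 11 + (-341832429478725015805763/679477248) * x ^ 12 + (-335852071652121398673253/2038431744) * x ^ 13 + (-28769740693454898960865/679477248) * x ^ 14 + (-2407246668210967891211/339738624) * x ^ 15 + (182134525259223692041/254803968) * x ^ 16 + (6140702482263839053/3538944) * x ^ 17 + (16000646549680627/32768) * x ^ 18 + (-5826533935414267/24576) * x ^ 19 + (-79658076149595/512) * x ^ 20 + (-3618197536875/64) * x ^ 21 + (-1519425283899/64) * x ^ 22 + (-19383279615/4) * x ^ 23 + (1724176125/4) * x ^ 24) + ((14279779109375/324) + (3117058882169375/6912)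 * x ^ 1 + (2815947498315709559935847/1320903770112) * x ^ 2 + (16530086682729663404878081/2641807540224) * x ^ 3 + (1433616625023991245635407/110075314176) * x ^ 4 + (110907438821725216307452223/5283615080448) * x ^ 5 + (73145828103280783513102889/2641807540224) * x ^ 6 + (79684550360060176262341285/2641807540224) * x ^ 7 + (45548344288154663472625633/1761205026816) * x ^ 8 + (9866609101818478798497031/587068342272) * x ^ 9 + (10807465205189970554746937/1320903770112) * x ^ 10 + (3592275745783465980813937/1320903770112) * x ^ 11 + (1482560681682742318479301/5283615080448) * x ^ 12 + (-699076284289840821656095/2641807540224) * x ^ 13 + (-132942481207363930969175/880602513408) * x ^ 14 + (-11958297940695851564501/330225942528) * x ^ 15 + (449707503921886843/84934656) * x ^ 16 + (4910518487211161887/382205952) * x ^ 17 + (38386373227468253/10616832) * x ^ 18 + (-2328889840304537/1327104) * x ^ 19 + (-42452867831885/36864) * x ^ 20 + (-11569662419305/27648) * x ^ 21 + (-22493343501/128) * x ^ 22 + (-1147788585/32) * x ^ 23 + (12762225/4) * x ^ 24) * (1350999/10000)) := mul_pos (by linarith) h1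
  have t2 : (0:ℝ) < (s - 1350999/10000) * (((-2840509750000) + (-48776864429470282625/995328) * x ^ 1 + (-9896694009878282590391/28311552) * x ^ 2 + (-728769301437643740517783/509607936) * x ^ 3 + (-1950305402911582515159905/509607936) * x ^ 4 + (-2434331217894605569899133/339738624) * x ^ 5 + (-314076318974027409630193/31850496) * x ^ 6 + (-6948948586303338743296495/679477248) * x ^ 7 + (-1893325843240016052491111/226492416) * x ^ 8 + (-11394779245040530788974057/2038431744) * x ^ 9 + (-6200654718887134679752193/2038431744) * x ^ 10 + (-2733817525953824483677849/2038431744) * x ^ 11 + (-341832429478725015805763/679477248) * x ^ 12 + (-335852071652121398673253/2038431744) * x ^ 13 + (-28769740693454898960865/679477248) * x ^ 14 + (-2407246668210967891211/339738624) * x ^ 15 + (182134525259223692041/254803968) * x ^ 16 + (6140702482263839053/3538944) * x ^ 17 + (16000646549680627/32768) * x ^ 18 + (-5826533935414267/24576) * x ^ 19 + (-79658076149595/512) * x ^ 20 + (-3618197536875/64) * x ^ 21 + (-1519425283899/64) * x ^ 22 + (-19383279615/4) * x ^ 23 + (1724176125/4) * x ^ 24) + ((14279779109375/324) + (3117058882169375/6912)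 * x ^ 1 + (2815947498315709559935847/1320903770112) * x ^ 2 + (16530086682729663404878081/2641807540224) * x ^ 3 + (1433616625023991245635407/110075314176) * x ^ 4 + (110907438821725216307452223/5283615080448) * x ^ 5 + (73145828103280783513102889/2641807540224) * x ^ 6 + (79684550360060176262341285/2641807540224) * x ^ 7 + (45548344288154663472625633/1761205026816) * x ^ 8 + (9866609101818478798497031/587068342272) * x ^ 9 + (10807465205189970554746937/1320903770112) * x ^ 10 + (3592275745783465980813937/1320903770112) * x ^ 11 + (1482560681682742318479301/5283615080448) * x ^ 12 + (-699076284289840821656095/2641807540224) * x ^ 13 + (-132942481207363930969175/880602513408) * x ^ 14 + (-11958297940695851564501/330225942528) * x ^ 15 + (449707503921886843/84934656) * x ^ 16 + (4910518487211161887/382205952) * x ^ 17 + (38386373227468253/10616832) * x ^ 18 + (-2328889840304537/1327104) * x ^ 19 + (-42452867831885/36864) * x ^ 20 + (-11569662419305/27648) * x ^ 21 + (-22493343501/128) * x ^ 22 + (-1147788585/32) * x ^ 23 + (12762225/4) * x ^ 24) * (1351/10)) := mul_pos (by linarith) h2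
  linarith [t1, t2, e]

lemma final_key (s x X Y Z W V : ℝ) (hs2 : s^2 = 18252) (hlo : (1350999/10000:ℝ) < s)
    (hhi : s < 1351/10) (hx : (17:ℝ) ≤ x) (hX : 0 < X) (hY : 0 < Y) (hZ : 0 < Z) (hW : 0 < W)
    (b1 : pl s (x-1) * X < (x-1)^5 * Y) (b1' : (x-1)^5 * Y < pu s (x-1) * X)
    (b2 : pl s x * Y < x^5 * Z) (b2' : x^5 * Z < pu s x * Y)
    (b3 : pl s (x+1) * Z < (x+1)^5 * W) (b3' : (x+1)^5 * W < pu s (x+1) * Z)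
    (b4 : pl s (x+2) * W < (x+2)^5 * V) (b4' : (x+2)^5 * V < pu s (x+2) * W) :
    (X*Z - Y^2) * (Z*V - W^2) > (Y*W - Z^2)^2 := by
  have hx1 : (0:ℝ) < (x-1)^5 := pow_pos (by linarith) 5
  have hx0 : (0:ℝ) < x^5 := pow_pos (by linarith) 5
  have hxp1 : (0:ℝ) < (x+1)^5 := pow_pos (by linarith) 5
  have hxp2 : (0:ℝ) < (x+2)^5 := pow_pos (by linarith) 5
  have h10 : (0:ℝ) < x^10 := pow_pos (by linarith) 10
  have h110 : (0:ℝ) < (x+1)^10 := pow_pos (by linarith) 10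
  have hdl0 : 0 < dl s x := dl_pos s x hs2 hlo hhi hx
  have hdl1 : 0 < dl s (x+1) := dl_pos s (x+1) hs2 hlo hhi (by linarith)
  have hdl2 : 0 < dl s (x+2) := dl_pos s (x+2) hs2 hlo hhi (by linarith)
  have hpu1 : 0 < pu s (x-1) := by
    have := pl_pos s (x-1) hs2 hlo hhi (by linarith)
    simp only [pu]; linarith
  have hF := F_ge s x hs2 hlo hhi hx
  have hA : dl s x * (X*Y) < ((x-1)^5 * x^5) * (X*Z - Y^2) := by
    have t1 := mul_lt_mul_of_pos_left b2 (mul_pos hx1 hX)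
    have t2 := mul_lt_mul_of_pos_left b1' (mul_pos hx0 hY)
    simp only [dl]
    linarith [t1, t2]
  have hC : dl s (x+2) * (Z*W) < ((x+1)^5 * (x+2)^5) * (Z*V - W^2) := by
    have t1 := mul_lt_mul_of_pos_left b4 (mul_pos hxp1 hZ)
    have t2 := mul_lt_mul_of_pos_left b3' (mul_pos hxp2 hW)
    simp only [dl]
    rw [show x+2-1 = x+1 by ring]
    linarith [t1, t2]
  have hBu : x^5*(x+1)^5*(Y*W - Z^2) < du s (x+1) * (Y*Z) := by
    have t1 := mul_lt_mul_of_pos_left b3' (mul_pos hx0 hY)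
    have t2 := mul_lt_mul_of_pos_left b2 (mul_pos hxp1 hZ)
    simp only [du]
    rw [show x+1-1 = x by ring]
    linarith [t1, t2]
  have hBl : dl s (x+1) * (Y*Z) < x^5*(x+1)^5*(Y*W - Z^2) := by
    have t1 := mul_lt_mul_of_pos_left b3 (mul_pos hx0 hY)
    have t2 := mul_lt_mul_of_pos_left b2' (mul_pos hxp1 hZ)
    simp only [dl]
    rw [show x+1-1 = x by ring]
    linarith [t1, t2]
  have hBpos : 0 < Y*W - Z^2 := by
    nlinarith [hBl, mul_pos hdl1 (mul_pos hY hZ), mul_pos hx0 hxp1]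
  have hApos : 0 < X*Z - Y^2 := by
    nlinarith [hA, mul_pos hdl0 (mul_pos hX hY), mul_pos hx1 hx0]
  have hCpos : 0 < Z*V - W^2 := by
    nlinarith [hC, mul_pos hdl2 (mul_pos hZ hW), mul_pos hxp1 hxp2]
  have hXW : (x-1)^5 * pl s (x+1) * (Y*Z) < pu s (x-1) * (x+1)^5 * (X*W) := by
    have t1 := mul_lt_mul_of_pos_left b3 (mul_pos hx1 hY)
    have t2 := mul_lt_mul_of_pos_left b1' (mul_pos hxp1 hW)
    linarith [t1, t2]
  have hG : (dl s x * (X*Y)) * (dl s (x+2) * (Z*W)) < (((x-1)^5*x^5)*(X*Z-Y^2)) * (((x+1)^5*(x+2)^5)*(Z*V-W^2)) :=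
    mul_lt_mul'' hA hC (mul_pos hdl0 (mul_pos hX hY)).le (mul_pos hdl2 (mul_pos hZ hW)).le
  have hB2 : (x^5*(x+1)^5*(Y*W-Z^2))^2 < (du s (x+1)*(Y*Z))^2 := by
    have hnn : 0 ≤ x^5*(x+1)^5*(Y*W-Z^2) := mul_nonneg (mul_pos hx0 hxp1).le hBpos.le
    nlinarith [hBu, hnn]
  have hKpos : (0:ℝ) < pu s (x-1) * (x+1)^5 * x^10 * (x+1)^10 :=
    mul_pos (mul_pos (mul_pos hpu1 hxp1) h10) h110
  have hKKpos : (0:ℝ) < pu s (x-1) * (x+1)^5 * x^10 * (x+1)^10 * ((x-1)^5 * x^5 * (x+1)^5 * (x+2)^5) :=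
    mul_pos hKpos (mul_pos (mul_pos (mul_pos hx1 hx0) hxp1) hxp2)
  have H : (pu s (x-1) * (x+1)^5 * x^10 * (x+1)^10 * ((x-1)^5 * x^5 * (x+1)^5 * (x+2)^5)) * ((Y*W - Z^2)^2)
      < (pu s (x-1) * (x+1)^5 * x^10 * (x+1)^10 * ((x-1)^5 * x^5 * (x+1)^5 * (x+2)^5)) * ((X*Z - Y^2)*(Z*V - W^2)) := by
    calc (pu s (x-1) * (x+1)^5 * x^10 * (x+1)^10 * ((x-1)^5 * x^5 * (x+1)^5 * (x+2)^5)) * ((Y*W - Z^2)^2)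
        = ((x-1)^5*x^5*(x+1)^5*(x+2)^5*pu s (x-1)*(x+1)^5) * ((x^5*(x+1)^5*(Y*W-Z^2))^2) := by ring
      _ < ((x-1)^5*x^5*(x+1)^5*(x+2)^5*pu s (x-1)*(x+1)^5) * ((du s (x+1)*(Y*Z))^2) := by
          refine mul_lt_mul_of_pos_left hB2 ?_
          exact mul_pos (mul_pos (mul_pos (mul_pos (mul_pos hx1 hx0) hxp1) hxp2) hpu1) hxp1
      _ = (pu s (x-1) * (du s (x+1))^2 * (x+2)^5) * ((x-1)^5*x^5*(x+1)^10*((Y*Z)^2)) := by ring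
      _ ≤ (pl s (x+1) * dl s x * dl s (x+2) * x^5) * ((x-1)^5*x^5*(x+1)^10*((Y*Z)^2)) := by
          refine mul_le_mul_of_nonneg_right hF ?_
          exact mul_nonneg (mul_nonneg (mul_nonneg hx1.le hx0.le) h110.le) (sq_nonneg _)
      _ = (dl s x * dl s (x+2) * (Y*Z) * x^10 * (x+1)^10) * ((x-1)^5 * pl s (x+1) * (Y*Z)) := by ring
      _ < (dl s x * dl s (x+2) * (Y*Z) * x^10 * (x+1)^10) * (pu s (x-1) * (x+1)^5 * (X*W)) := by
          refine mul_lt_mul_of_pos_left hXW ?_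
          exact mul_pos (mul_pos (mul_pos (mul_pos hdl0 hdl2) (mul_pos hY hZ)) h10) h110
      _ = (pu s (x-1) * (x+1)^5 * x^10 * (x+1)^10) * ((dl s x * (X*Y)) * (dl s (x+2) * (Z*W))) := by ring
      _ < (pu s (x-1) * (x+1)^5 * x^10 * (x+1)^10) * ((((x-1)^5*x^5)*(X*Z-Y^2)) * (((x+1)^5*(x+2)^5)*(Z*V-W^2))) :=
          mul_lt_mul_of_pos_left hG hKpos
      _ = (pu s (x-1) * (x+1)^5 * x^10 * (x+1)^10 * ((x-1)^5 * x^5 * (x+1)^5 * (x+2)^5)) * ((X*Z - Y^2)*(Z*V - W^2)) := by ring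
  have := lt_of_mul_lt_mul_left H hKKpos.le
  linarith

theorem cohenRhin_strict_two_log_convex (U : ℕ → ℝ)
    (h0 : U 0 = 1) (h1 : U 1 = 12)
    (hrec : ∀ n : ℕ, 1 ≤ n →
      U (n + 1) =
        (3 * (2 * (n : ℝ) + 1) * (3 * (n : ℝ) ^ 2 + 3 * (n : ℝ) + 1)
            * (15 * (n : ℝ) ^ 2 + 15 * (n : ℝ) + 4) / ((n : ℝ) + 1) ^ 5) * U n
          + (3 * (n : ℝ) ^ 3 * (3 * (n : ℝ) - 1) * (3 * (n : ℝ) + 1)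
            / ((n : ℝ) + 1) ^ 5) * U (n - 1)) :
    ∀ n : ℕ, 1 ≤ n →
      (U (n - 1) * U (n + 1) - U n ^ 2) * (U (n + 1) * U (n + 3) - U (n + 2) ^ 2) >
        (U n * U (n + 2) - U (n + 1) ^ 2) ^ 2 := by
  obtain ⟨s, hs2, hlo, hhi⟩ : ∃ s : ℝ, s^2 = 18252 ∧ (1350999/10000:ℝ) < s ∧ s < 1351/10 := by
    refine ⟨Real.sqrt 18252, Real.sq_sqrt (by norm_num), ?_, ?_⟩
    · nlinarith [Real.sq_sqrt (show (0:ℝ) ≤ 18252 by norm_num), Real.sqrt_nonneg (18252:ℝ)]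
    · nlinarith [Real.sq_sqrt (show (0:ℝ) ≤ 18252 by norm_num), Real.sqrt_nonneg (18252:ℝ)]
  have ev0 : U 0 = 1 := h0
  have ev1 : U 1 = 12 := h1
  have ev2 : U 2 = 804 := by
    have h := hrec 1 (by norm_num)
    norm_num [ev0, ev1] at h
    linarith [h]
  have ev3 : U 3 = 88680 := by
    have h := hrec 2 (by norm_num)
    norm_num [ev1, ev2] at h
    linarith [h]
  have ev4 : U 4 = 12386340 := by
    have h := hrec 3 (by norm_num)
    norm_num [ev2, ev3] at h
    linarith [h]
  have ev5 : U 5 = 1985320512 := by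
    have h := hrec 4 (by norm_num)
    norm_num [ev3, ev4] at h
    linarith [h]
  have ev6 : U 6 = 348219006744 := by
    have h := hrec 5 (by norm_num)
    norm_num [ev4, ev5] at h
    linarith [h]
  have ev7 : U 7 = 65085592725648 := by
    have h := hrec 6 (by norm_num)
    norm_num [ev5, ev6] at h
    linarith [h]
  have ev8 : U 8 = 12753825281316900 := by
    have h := hrec 7 (by norm_num)
    norm_num [ev6, ev7] at h
    linarith [h]
  have ev9 : U 9 = 2592090993453733200 := by
    have h := hrec 8 (by norm_num)
    norm_num [ev7, ev8] at h
    linarith [h]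
  have ev10 : U 10 = 542345058701093666304 := by
    have h := hrec 9 (by norm_num)
    norm_num [ev8, ev9] at h
    linarith [h]
  have ev11 : U 11 = 116192631187950808203648 := by
    have h := hrec 10 (by norm_num)
    norm_num [ev9, ev10] at h
    linarith [h]
  have ev12 : U 12 = 25387248470938096734043416 := by
    have h := hrec 11 (by norm_num)
    norm_num [ev10, ev11] at h
    linarith [h]
  have ev13 : U 13 = 5639653178340668177808156480 := by
    have h := hrec 12 (by norm_num)
    norm_num [ev11, ev12] at h
    linarith [h]
  have ev14 : U 14 = 1270704973262949380127900086640 := by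
    have h := hrec 13 (by norm_num)
    norm_num [ev12, ev13] at h
    linarith [h]
  have ev15 : U 15 = 289841298870401830031242717723680 := by
    have h := hrec 14 (by norm_num)
    norm_num [ev13, ev14] at h
    linarith [h]
  have ev16 : U 16 = 66822817305407619390477185586714660 := by
    have h := hrec 15 (by norm_num)
    norm_num [ev14, ev15] at h
    linarith [h]
  have ev17 : U 17 = 15551937792457613841438566865613908720 := by
    have h := hrec 16 (by norm_num)
    norm_num [ev15, ev16] at h
    linarith [h]
  have ev18 : U 18 = 3649884063442065340837778418119730649200 := by
    have h := hrec 17 (by norm_num)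
    norm_num [ev16, ev17] at h
    linarith [h]
  have ev19 : U 19 = 863021426644013904009533145362439091413600 := by
    have h := hrec 18 (by norm_num)
    norm_num [ev17, ev18] at h
    linarith [h]
  have hpos : ∀ k : ℕ, 0 < U k ∧ 0 < U (k+1) := by
    intro k
    induction k with
    | zero => exact ⟨by rw [h0]; norm_num, by rw [h1]; norm_num⟩
    | succ m ih =>
      refine ⟨ih.2, ?_⟩
      have hr := hrec (m+1) (by omega)
      simp only [Nat.add_sub_cancel] at hr
      rw [hr]
      push_cast
      have hp1 : (0:ℝ) < 3*(2*((m:ℝ)+1)+1)*(3*((m:ℝ)+1)^2+3*((m:ℝ)+1)+1)*(15*((m:ℝ)+1)^2+15*((m:ℝ)+1)+4)/(((m:ℝ)+1)+1)^5 := by positivity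
      have hp2 : (0:ℝ) ≤ 3*((m:ℝ)+1)^3*(3*((m:ℝ)+1)-1)*(3*((m:ℝ)+1)+1)/(((m:ℝ)+1)+1)^5 := by
        rw [show 3*((m:ℝ)+1)-1 = 3*(m:ℝ)+2 by ring]
        positivity
      nlinarith [mul_pos hp1 ih.2, mul_nonneg hp2 ih.1.le]
  have hU : ∀ k : ℕ, 0 < U k := fun k => (hpos k).1
  have hb : ∀ m : ℕ, 16 ≤ m → pl s (m:ℝ) * U m < (m:ℝ)^5 * U (m+1) ∧ (m:ℝ)^5 * U (m+1) < pu s (m:ℝ) * U m := by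
    intro m hm
    induction m, hm using Nat.le_induction with
    | base =>
      constructor
      · rw [ev16, ev17]
        simp only [pl, pu]
        push_cast
        nlinarith [hlo, hhi]
      · rw [ev16, ev17]
        simp only [pl, pu]
        push_cast
        nlinarith [hlo, hhi]
    | succ n hn ih =>
      obtain ⟨ih1, ih2⟩ := ih
      have hc : (16:ℝ) ≤ (n:ℝ) := by exact_mod_cast hn
      have hU0 := hU n
      have hU1 := hU (n+1)
      have hr := hrec (n+1) (by omega)
      simp only [Nat.add_sub_cancel] at hr
      push_cast at hr ⊢
      have hne : ((n:ℝ)+1+1) ≠ 0 := by positivity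
      have hrm : ((n:ℝ)+2)^5 * U (n+2) = (3*(2*((n:ℝ)+1)+1)*(3*((n:ℝ)+1)^2+3*((n:ℝ)+1)+1)*(15*((n:ℝ)+1)^2+15*((n:ℝ)+1)+4)) * U (n+1) + (3*((n:ℝ)+1)^3*(3*((n:ℝ)+1)-1)*(3*((n:ℝ)+1)+1)) * U n := by
        rw [hr]
        field_simp
        ring
      have hq : (0:ℝ) < 3*((n:ℝ)+1)^3*(3*((n:ℝ)+1)-1)*(3*((n:ℝ)+1)+1) := by
        rw [show 3*((n:ℝ)+1)-1 = 3*(n:ℝ)+2 by ring]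
        positivity
      have hplpos : (0:ℝ) < pl s (n:ℝ) := pl_pos s (n:ℝ) hs2 hlo hhi hc
      have hpupos : (0:ℝ) < pu s (n:ℝ) := by simp only [pu]; linarith
      have hx17 : (17:ℝ) ≤ (n:ℝ)+1 := by linarith
      have kA1 := A1_ge s ((n:ℝ)+1) hs2 hlo hhi hx17
      have kA2 := A2_ge s ((n:ℝ)+1) hs2 hlo hhi hx17
      rw [show (n:ℝ)+1-1 = (n:ℝ) by ring] at kA1 kA2
      have h5 : (0:ℝ) < ((n:ℝ)+1)^5 := by positivity
      have h25 : (0:ℝ) < ((n:ℝ)+2)^5 := by positivity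
      constructor
      · have t1 := mul_lt_mul_of_pos_left ih2 hq
        have t1' := mul_lt_mul_of_pos_left t1 h5
        have t2 := mul_le_mul_of_nonneg_right kA1 hU1.le
        have hrm2 : pu s (n:ℝ) * ((n:ℝ)+1)^5 * (((n:ℝ)+2)^5 * U (n+2)) = pu s (n:ℝ) * ((n:ℝ)+1)^5 * ((3*(2*((n:ℝ)+1)+1)*(3*((n:ℝ)+1)^2+3*((n:ℝ)+1)+1)*(15*((n:ℝ)+1)^2+15*((n:ℝ)+1)+4)) * U (n+1) + (3*((n:ℝ)+1)^3*(3*((n:ℝ)+1)-1)*(3*((n:ℝ)+1)+1)) * U n) := by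
          rw [hrm]
        have H : (pu s (n:ℝ) * ((n:ℝ)+2)^5) * (pl s ((n:ℝ)+1) * U (n+1)) < (pu s (n:ℝ) * ((n:ℝ)+2)^5) * (((n:ℝ)+1)^5 * U (n+2)) := by
          linarith [t1', t2, hrm2]
        exact lt_of_mul_lt_mul_left H (mul_pos hpupos h25).le
      · have t1 := mul_lt_mul_of_pos_left ih1 hq
        have t1' := mul_lt_mul_of_pos_left t1 h5
        have t2 := mul_le_mul_of_nonneg_right kA2 hU1.le
        have hrm2 : pl s (n:ℝ) * ((n:ℝ)+1)^5 * (((n:ℝ)+2)^5 * U (n+2)) = pl s (n:ℝ) * ((n:ℝ)+1)^5 * ((3*(2*((n:ℝ)+1)+1)*(3*((n:ℝ)+1)^2+3*((n:ℝ)+1)+1)*(15*((n:ℝ)+1)^2+15*((n:ℝ)+1)+4)) * U (n+1) + (3*((n:ℝ)+1)^3*(3*((n:ℝ)+1)-1)*(3*((n:ℝ)+1)+1)) * U n) := by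
          rw [hrm]
        have H : (pl s (n:ℝ) * ((n:ℝ)+2)^5) * (((n:ℝ)+1)^5 * U (n+2)) < (pl s (n:ℝ) * ((n:ℝ)+2)^5) * (pu s ((n:ℝ)+1) * U (n+1)) := by
          linarith [t1', t2, hrm2]
        exact lt_of_mul_lt_mul_left H (mul_pos hplpos h25).le
  intro n hn1
  by_cases hle : n ≤ 16
  · interval_cases n <;> norm_num [ev0, ev1, ev2, ev3, ev4, ev5, ev6, ev7, ev8, ev9, ev10, ev11, ev12, ev13, ev14, ev15, ev16, ev17, ev18, ev19]
  · have hn : 17 ≤ n := by omega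
    have hc17 : (17:ℝ) ≤ (n:ℝ) := by exact_mod_cast hn
    have h1b := hb (n-1) (by omega)
    have h2b := hb n (by omega)
    have h3b := hb (n+1) (by omega)
    have h4b := hb (n+2) (by omega)
    rw [show n-1+1 = n by omega] at h1b
    have h' : (1:ℕ) ≤ n := by omega
    rw [show ((n-1:ℕ):ℝ) = (n:ℝ)-1 by rw [Nat.cast_sub h', Nat.cast_one]] at h1b
    push_cast at h2b h3b h4b
    exact final_key s ((n:ℝ)) (U (n-1)) (U n) (U (n+1)) (U (n+2)) (U (n+3)) hs2 hlo hhi hc17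
      (hU (n-1)) (hU n) (hU (n+1)) (hU (n+2))
      h1b.1 h1b.2 h2b.1 h2b.2 h3b.1 h3b.2 h4b.1 h4b.2
end

section
/- The large Schröder numbers s_n, satisfying (n+2) s_{n+1} = 3(2n+1) s_n - (n-1) s_{n-1} with s_0 = 1, s_1 = 2, form a strictly log-convex sequence: s_n^2 < s_{n-1} s_{n+1} for all n ≥ 1. -/
theorem schroeder_strict_log_convex (s : ℕ → ℝ)
    (h0 : s 0 = 1) (h1 : s 1 = 2)
    (hrec : ∀ n : ℕ, 1 ≤ n →
      ((n : ℝ) + 2) * s (n + 1) = 3 * (2 * (n : ℝ) + 1) * s n - ((n : ℝ) - 1) * s (n - 1)) :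
    ∀ n : ℕ, 1 ≤ n → s n ^ 2 < s (n - 1) * s (n + 1) := by
  have P : ∀ m : ℕ, 0 < s m ∧ 2 * s m ≤ s (m+1) ∧
      ((m:ℝ)+3) * s (m+1)^2 - 3*(2*(m:ℝ)+3) * s m * s (m+1) + (m:ℝ) * s m ^2 < 0 := by
    intro m
    induction m with
    | zero => norm_num [h0, h1]
    | succ k ih =>
      obtain ⟨hk0, hk1, hk2⟩ := ih
      have hr := hrec (k+1) (Nat.le_add_left 1 k)
      simp only [Nat.add_sub_cancel] at hr
      push_cast at hr ⊢
      set t : ℝ := (k : ℝ) with htdef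
      have ht : (0:ℝ) ≤ t := Nat.cast_nonneg k
      have hb : 0 < s (k+1) := by nlinarith
      have hH1 : 0 ≤ (t^2 + 4*t) *
          (-((t+3) * s (k+1)^2 - 3*(2*t+3) * s k * s (k+1) + t * s k ^2)) := by
        apply mul_nonneg (by positivity)
        linarith
      have hT : 0 ≤ t * (s (k+1) * (51 * s (k+1) - 9 * s k)) :=
        mul_nonneg ht (mul_nonneg hb.le (by linarith))
      have hB : 0 < s (k+1)^2 := by positivity
      have key2 : (t+4)*((6*t+9)*s (k+1) - t*s k)^2
          - 3*(2*t+5)*s (k+1)*((6*t+9)*s (k+1) - t*s k)*(t+3)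
          + (t+1)*s (k+1)^2*(t+3)^2 < 0 := by nlinarith [hH1, hT, hB]
      have e : (t+4)*((6*t+9)*s (k+1) - t*s k)^2
          - 3*(2*t+5)*s (k+1)*((6*t+9)*s (k+1) - t*s k)*(t+3)
          + (t+1)*s (k+1)^2*(t+3)^2
          = ((t+1+3) * s (k+1+1)^2 - 3*(2*(t+1)+3) * s (k+1) * s (k+1+1)
              + (t+1) * s (k+1) ^2) * (t+3)^2 := by
        linear_combination (-((t+4)*((t+3)*s (k+1+1) + ((6*t+9)*s (k+1) - t*s k))
            - 3*(2*t+5)*s (k+1)*(t+3))) * hr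
      rw [e] at key2
      refine ⟨hb, by nlinarith, ?_⟩
      by_contra hcon
      push_neg at hcon
      nlinarith [key2, mul_nonneg (mul_nonneg ht ht) hcon, mul_nonneg ht hcon]
  intro n hn
  match n, hn with
  | (m+1), _ =>
    obtain ⟨hm0, hm1, hm2⟩ := P m
    have hr := hrec (m+1) (Nat.le_add_left 1 m)
    simp only [Nat.add_sub_cancel] at hr ⊢
    push_cast at hr
    have ht : (0:ℝ) ≤ (m:ℝ) := Nat.cast_nonneg m
    have e : ((m:ℝ)+3) * (s (m+1)^2 - s m * s (m+1+1))
        = ((m:ℝ)+3) * s (m+1)^2 - 3*(2*(m:ℝ)+3) * s m * s (m+1) + (m:ℝ) * s m ^2 := by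
      linear_combination (-(s m)) * hr
    by_contra hcon
    push_neg at hcon
    nlinarith [e, hm2, mul_nonneg ht (by linarith : (0:ℝ) ≤ s (m+1)^2 - s m * s (m+1+1))]
end
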